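/- Suppose f : ℝ^d → ℝ is L_f-smooth and g : ℝ^d → ℝ ∪ {+∞} is proper, lower semicontinuous and ρ-weakly convex, and let D := {x ∈ ℝ^d : g(x) < +∞} (which is convex). Let (u^k) be a sequence in ℝ^d with u^k → ū, and let (γ_k) be a sequence with γ_k ∈ (0, 1/ρ) and γ_k → 0. For each k let y^k be the unique minimizer over y ∈ ℝ^d of g(y) + (1/(2γ_k))‖y − (u^k − γ_k ∇f(u^k))‖². Then y^k converges to the unique nearest point of the closure of D to ū, i.e., y^k → p where p ∈ cl(D) and ‖ū − p‖ ≤ ‖ū − w‖ for every w ∈ cl(D). -/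

import Mathlib

/-!
The points `y k` are proximal points of `g` at `w k := u k - γ k • ∇f (u k)`, and `w k → ū`
since `∇f` is continuous. Lower semicontinuity bounds `g + (ρ/2)‖·‖²` below on a ball, and its
convexity spreads that bound linearly along rays, so `g ≥ c - μ‖·‖²`. Comparing the prox objective
at `y k` with its value at any `z ∈ dom g` then gives
`(1 - 4 γ k μ) ‖y k - w k‖² ≤ ‖z - w k‖² + O(γ k)`, hence `limsup ‖ū - y k‖ ≤ dist(ū, dom g)`.
The `y k` lie in `C = cl (dom g)`, and the projection `p` of `ū` on the closed convex set `C`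
satisfies `‖ū - p‖² + ‖y - p‖² ≤ ‖ū - y‖²` for `y ∈ C`; this forces `y k → p`.
-/

open scoped RealInnerProductSpace
open Filter

/-- `g` is `ρ`-weakly convex: `g + (ρ/2)‖·‖²` is convex (extended-real-valued version). -/
def WeaklyConvexE {E : Type*} [NormedAddCommGroup E] [InnerProductSpace ℝ E]
    (ρ : ℝ) (g : E → EReal) : Prop :=
  ∀ x y : E, ∀ t : ℝ, 0 ≤ t → t ≤ 1 →
    g (t • x + (1 - t) • y) + (((ρ / 2) * ‖t • x + (1 - t) • y‖ ^ 2 : ℝ) : EReal) ≤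
      (t : EReal) * (g x + (((ρ / 2) * ‖x‖ ^ 2 : ℝ) : EReal)) +
        ((1 - t : ℝ) : EReal) * (g y + (((ρ / 2) * ‖y‖ ^ 2 : ℝ) : EReal))

open Topology

theorem LowerSemicontinuous.exists_coe_le_of_isCompact {α : Type*} [TopologicalSpace α]
    {h : α → EReal} (hh : LowerSemicontinuous h) (hbot : ∀ x, h x ≠ ⊥) {s : Set α}
    (hs : IsCompact s) : ∃ m : ℝ, ∀ x ∈ s, (m : EReal) ≤ h x := by
  rcases s.eq_empty_or_nonempty with rfl | hne
  · exact ⟨0, by simp⟩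
  obtain ⟨a, -, ha⟩ := (hh.lowerSemicontinuousOn s).exists_isMinOn hne hs
  exact ⟨(h a).toReal, fun x hx => (EReal.coe_toReal_le (hbot a)).trans (ha hx)⟩

theorem ConvexOn.sub_mul_norm_le_of_forall_closedBall {E : Type*} [NormedAddCommGroup E]
    [NormedSpace ℝ E] {D : Set E} {φ : E → ℝ} (hφ : ConvexOn ℝ D φ) {m : ℝ} {z₀ : E}
    (hz₀ : z₀ ∈ D) (hm : ∀ x ∈ D, x ∈ Metric.closedBall z₀ 1 → m ≤ φ x) {v : E} (hv : v ∈ D) :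
    m - (φ z₀ - m) * ‖v - z₀‖ ≤ φ v := by
  have hL : 0 ≤ φ z₀ - m := sub_nonneg.2 (hm z₀ hz₀ (Metric.mem_closedBall_self zero_le_one))
  rcases le_or_gt ‖v - z₀‖ 1 with hr | hr
  · have := hm v hv (mem_closedBall_iff_norm.2 hr)
    nlinarith [norm_nonneg (v - z₀)]
  set r := ‖v - z₀‖
  have hr₀ : 0 < r := one_pos.trans hr
  have hq : r⁻¹ • v + (1 - r⁻¹) • z₀ ∈ Metric.closedBall z₀ 1 := by
    rw [mem_closedBall_iff_norm, show r⁻¹ • v + (1 - r⁻¹) • z₀ - z₀ = r⁻¹ • (v - z₀) by module,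
      norm_smul, Real.norm_of_nonneg (inv_nonneg.2 hr₀.le), inv_mul_cancel₀ hr₀.ne']
  have ht₀ : 0 ≤ r⁻¹ := inv_nonneg.2 hr₀.le
  have ht₁ : 0 ≤ 1 - r⁻¹ := sub_nonneg.2 (inv_le_one_of_one_le₀ hr.le)
  have hmq : m ≤ r⁻¹ * φ v + (1 - r⁻¹) * φ z₀ :=
    (hm _ (hφ.1 hv hz₀ ht₀ ht₁ (add_sub_cancel _ _)) hq).trans
      (hφ.2 hv hz₀ ht₀ ht₁ (add_sub_cancel _ _))
  have hexpand : r * (r⁻¹ * φ v + (1 - r⁻¹) * φ z₀) = φ v + (r - 1) * φ z₀ := by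
    field_simp
  nlinarith [mul_le_mul_of_nonneg_left hmq hr₀.le]

namespace WeaklyConvexE

variable {E : Type*} [NormedAddCommGroup E] [InnerProductSpace ℝ E] {ρ : ℝ} {g : E → EReal}

theorem add_le_coe (hwc : WeaklyConvexE ρ g) {x y : E} {a b t : ℝ} (hx : g x = a) (hy : g y = b)
    (ht₀ : 0 ≤ t) (ht₁ : t ≤ 1) :
    g (t • x + (1 - t) • y) + ((ρ / 2 * ‖t • x + (1 - t) • y‖ ^ 2 : ℝ) : EReal) ≤
      ((t * (a + ρ / 2 * ‖x‖ ^ 2) + (1 - t) * (b + ρ / 2 * ‖y‖ ^ 2) : ℝ) : EReal) := by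
  simpa only [hx, hy, EReal.coe_add, EReal.coe_mul] using hwc x y t ht₀ ht₁

theorem convex_dom (hwc : WeaklyConvexE ρ g) (hbot : ∀ x, g x ≠ ⊥) :
    Convex ℝ {x | g x ≠ ⊤} := by
  refine convex_iff_forall_pos.2 fun x hx y hy s t _ ht hst => ?_
  obtain rfl : t = 1 - s := by linarith
  intro htop
  have := hwc.add_le_coe (EReal.coe_toReal hx (hbot x)).symm (EReal.coe_toReal hy (hbot y)).symm
    (by linarith) (by linarith)
  rw [htop, EReal.top_add_coe, top_le_iff] at this
  exact EReal.coe_ne_top _ this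

theorem convexOn_toReal (hwc : WeaklyConvexE ρ g) (hbot : ∀ x, g x ≠ ⊥) :
    ConvexOn ℝ {x | g x ≠ ⊤} fun x => (g x).toReal + ρ / 2 * ‖x‖ ^ 2 := by
  refine ⟨hwc.convex_dom hbot, fun x hx y hy s t hs ht hst => ?_⟩
  obtain rfl : t = 1 - s := by linarith
  have hmem := hwc.convex_dom hbot hx hy hs ht hst
  have := hwc.add_le_coe (EReal.coe_toReal hx (hbot x)).symm (EReal.coe_toReal hy (hbot y)).symm
    hs (by linarith)
  rw [← EReal.coe_toReal hmem (hbot _), ← EReal.coe_add, EReal.coe_le_coe_iff] at this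
  simpa only [smul_eq_mul] using this

theorem exists_coe_sub_mul_sq_le [ProperSpace E] (hwc : WeaklyConvexE ρ g)
    (hlsc : LowerSemicontinuous g) (hbot : ∀ x, g x ≠ ⊥) {z₀ : E} (hz₀ : g z₀ ≠ ⊤) :
    ∃ c μ : ℝ, 0 ≤ μ ∧ ∀ v, ((c - μ * ‖v‖ ^ 2 : ℝ) : EReal) ≤ g v := by
  have hquad : Continuous fun x : E => ((ρ / 2 * ‖x‖ ^ 2 : ℝ) : EReal) :=
    continuous_coe_real_ereal.comp (by fun_prop)
  have hlsc' : LowerSemicontinuous fun x => g x + ((ρ / 2 * ‖x‖ ^ 2 : ℝ) : EReal) :=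
    hlsc.add' hquad.lowerSemicontinuous fun x =>
      EReal.continuousAt_add (.inr (EReal.coe_ne_bot _)) (.inr (EReal.coe_ne_top _))
  obtain ⟨m, hm⟩ := hlsc'.exists_coe_le_of_isCompact
    (fun x => EReal.add_ne_bot_iff.2 ⟨hbot x, EReal.coe_ne_bot _⟩) (isCompact_closedBall z₀ 1)
  have hm' : ∀ x ∈ {x | g x ≠ ⊤}, x ∈ Metric.closedBall z₀ 1 →
      m ≤ (g x).toReal + ρ / 2 * ‖x‖ ^ 2 := fun x hx hxB => by
    have := hm x hxB
    rwa [← EReal.coe_toReal hx (hbot x), ← EReal.coe_add, EReal.coe_le_coe_iff] at this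
  set L := (g z₀).toReal + ρ / 2 * ‖z₀‖ ^ 2 - m
  have hL : 0 ≤ L := sub_nonneg.2 (hm' z₀ hz₀ (Metric.mem_closedBall_self zero_le_one))
  refine ⟨m - L ^ 2 / 4 - L * ‖z₀‖, 1 + |ρ| / 2, by positivity, fun v => ?_⟩
  by_cases hv : g v = ⊤
  · simp [hv]
  rw [← EReal.coe_toReal hv (hbot v), EReal.coe_le_coe_iff]
  have hv₀ : ‖v - z₀‖ ≤ ‖v‖ + ‖z₀‖ := norm_sub_le v z₀
  have hρv : ρ / 2 * ‖v‖ ^ 2 ≤ |ρ| / 2 * ‖v‖ ^ 2 :=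
    mul_le_mul_of_nonneg_right (by linarith [le_abs_self ρ]) (sq_nonneg _)
  have hray : m - L * ‖v - z₀‖ ≤ (g v).toReal + ρ / 2 * ‖v‖ ^ 2 :=
    (hwc.convexOn_toReal hbot).sub_mul_norm_le_of_forall_closedBall hz₀ hm' hv
  nlinarith [hray, mul_le_mul_of_nonneg_left hv₀ hL, sq_nonneg (‖v‖ - L / 2)]

end WeaklyConvexE

section Projection

variable {F : Type*} [NormedAddCommGroup F] [InnerProductSpace ℝ F]

theorem norm_sub_sq_add_le_of_inner_le_zero {u p w : F} (h : ⟪u - p, w - p⟫ ≤ 0) :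
    ‖u - p‖ ^ 2 + ‖w - p‖ ^ 2 ≤ ‖u - w‖ ^ 2 := by
  have := norm_sub_sq_real (u - p) (w - p)
  rw [sub_sub_sub_cancel_right] at this
  linarith

theorem tendsto_of_forall_inner_le_zero {K : Set F} {u p : F} (hp : ∀ w ∈ K, ⟪u - p, w - p⟫ ≤ 0)
    {ι : Type*} {l : Filter ι} {x : ι → F} (hx : ∀ i, x i ∈ K)
    (hlim : ∀ a, ‖u - p‖ < a → ∀ᶠ i in l, ‖u - x i‖ < a) : Tendsto x l (𝓝 p) := by
  refine Metric.tendsto_nhds.2 fun ε hε => ?_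
  have ha : ‖u - p‖ < √(‖u - p‖ ^ 2 + ε ^ 2) :=
    Real.lt_sqrt_of_sq_lt (by linarith [pow_pos hε 2])
  filter_upwards [hlim _ ha] with i hi
  have hsq : ‖u - x i‖ ^ 2 < ‖u - p‖ ^ 2 + ε ^ 2 :=
    (Real.lt_sqrt (norm_nonneg _)).1 hi
  have := norm_sub_sq_add_le_of_inner_le_zero (hp _ (hx i))
  rw [dist_eq_norm]
  exact (pow_lt_pow_iff_left₀ (norm_nonneg _) hε.le two_ne_zero).1 (by linarith)

end Projection

section Prox

variable {E : Type*} [NormedAddCommGroup E] {g : E → EReal} {c μ : ℝ}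

theorem sq_norm_sub_le_of_prox (hμ : 0 ≤ μ) (hminor : ∀ v, ((c - μ * ‖v‖ ^ 2 : ℝ) : EReal) ≤ g v)
    {γ B : ℝ} (hγ : 0 < γ) {w y z : E} (hz : g z = B)
    (hy : g y + ((1 / (2 * γ) * ‖y - w‖ ^ 2 : ℝ) : EReal) ≤
      g z + ((1 / (2 * γ) * ‖z - w‖ ^ 2 : ℝ) : EReal)) :
    (1 - 4 * γ * μ) * ‖y - w‖ ^ 2 ≤ ‖z - w‖ ^ 2 + 2 * γ * (B - c + 2 * μ * ‖w‖ ^ 2) := by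
  have hreal : c - μ * ‖y‖ ^ 2 + 1 / (2 * γ) * ‖y - w‖ ^ 2 ≤ B + 1 / (2 * γ) * ‖z - w‖ ^ 2 := by
    have := (add_le_add (hminor y) le_rfl).trans (hz ▸ hy)
    exact_mod_cast this
  have hy_sq : ‖y‖ ^ 2 ≤ 2 * ‖y - w‖ ^ 2 + 2 * ‖w‖ ^ 2 := by
    nlinarith [pow_le_pow_left₀ (norm_nonneg y) (norm_le_norm_sub_add y w) 2,
      sq_nonneg (‖y - w‖ - ‖w‖)]
  have hγinv : 2 * γ * (1 / (2 * γ)) = 1 := by field_simp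
  nlinarith [mul_le_mul_of_nonneg_left hreal (by positivity : (0 : ℝ) ≤ 2 * γ),
    mul_le_mul_of_nonneg_left hy_sq (by positivity : (0 : ℝ) ≤ 2 * γ * μ)]

theorem eventually_norm_sub_prox_lt (hμ : 0 ≤ μ)
    (hminor : ∀ v, ((c - μ * ‖v‖ ^ 2 : ℝ) : EReal) ≤ g v) {ι : Type*} {l : Filter ι}
    {w y : ι → E} {ū : E} (hw : Tendsto w l (𝓝 ū)) {γ : ι → ℝ} (hγ : ∀ i, 0 < γ i)
    (hγ₀ : Tendsto γ l (𝓝 0))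
    (hy : ∀ i, ∀ z : E, g (y i) + ((1 / (2 * γ i) * ‖y i - w i‖ ^ 2 : ℝ) : EReal) ≤
      g z + ((1 / (2 * γ i) * ‖z - w i‖ ^ 2 : ℝ) : EReal))
    {z : E} (hz : g z ≠ ⊤) {a : ℝ} (ha : ‖ū - z‖ < a) : ∀ᶠ i in l, ‖ū - y i‖ < a := by
  set B := (g z).toReal
  have hzB : g z = B :=
    (EReal.coe_toReal hz (ne_bot_of_le_ne_bot (EReal.coe_ne_bot _) (hminor z))).symm
  let Φ : ℝ × E → ℝ := fun q =>
    √((‖z - q.2‖ ^ 2 + 2 * q.1 * (B - c + 2 * μ * ‖q.2‖ ^ 2)) / (1 - 4 * q.1 * μ)) + ‖q.2 - ū‖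
  have hΦ : ContinuousAt Φ (0, ū) := by fun_prop (disch := norm_num)
  have hΦ₀ : Φ (0, ū) = ‖ū - z‖ := by simp [Φ, norm_sub_rev]
  have hlim := hΦ.tendsto.comp (hγ₀.prodMk_nhds hw)
  rw [hΦ₀] at hlim
  filter_upwards [hlim.eventually_lt_const ha,
    (hγ₀.const_mul (4 * μ)).eventually_lt_const (by norm_num : 4 * μ * 0 < 1)] with i hΦi hγi
  have hden : 0 < 1 - 4 * γ i * μ := by linarith
  have hstep := sq_norm_sub_le_of_prox hμ hminor (hγ i) hzB (hy i z)
  have hyw : ‖y i - w i‖ ≤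
      √((‖z - w i‖ ^ 2 + 2 * γ i * (B - c + 2 * μ * ‖w i‖ ^ 2)) / (1 - 4 * γ i * μ)) :=
    Real.le_sqrt_of_sq_le ((le_div_iff₀ hden).2 (by linarith))
  calc ‖ū - y i‖ ≤ ‖y i - w i‖ + ‖w i - ū‖ := by
        rw [norm_sub_rev]; exact norm_sub_le_norm_sub_add_norm_sub _ _ _
    _ < a := by simp only [Φ, Function.comp_apply] at hΦi; linarith

end Prox

theorem fb_map_tendsto_projection_general
    {E : Type*} [NormedAddCommGroup E] [InnerProductSpace ℝ E] [FiniteDimensional ℝ E]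
    (f : E → ℝ) (g : E → EReal) (Lf ρ : ℝ)
    (hflip : ∀ x y : E, ‖gradient f x - gradient f y‖ ≤ Lf * ‖x - y‖)
    (hgtop : ∃ x, g x ≠ ⊤) (hgbot : ∀ x, g x ≠ ⊥)
    (hglsc : LowerSemicontinuous g)
    (hwc : WeaklyConvexE ρ g)
    (u : ℕ → E) (ubar : E) (hu : Tendsto u atTop (nhds ubar))
    (γ : ℕ → ℝ) (hγpos : ∀ k, 0 < γ k)
    (hγ0 : Tendsto γ atTop (nhds 0))
    (y : ℕ → E)
    (hy : ∀ k, ∀ z : E,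
      g (y k) + ((1 / (2 * γ k) *
        ‖y k - (u k - γ k • gradient f (u k))‖ ^ 2 : ℝ) : EReal) ≤
      g z + ((1 / (2 * γ k) *
        ‖z - (u k - γ k • gradient f (u k))‖ ^ 2 : ℝ) : EReal)) :
    ∃ p : E, p ∈ closure {x : E | g x ≠ ⊤} ∧
      (∀ w ∈ closure {x : E | g x ≠ ⊤}, ‖ubar - p‖ ≤ ‖ubar - w‖) ∧
      Tendsto y atTop (nhds p) := by
  obtain ⟨z₀, hz₀⟩ := hgtop
  obtain ⟨c, μ, hμ, hminor⟩ := hwc.exists_coe_sub_mul_sq_le hglsc hgbot hz₀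
  have hgrad : Continuous (gradient f) :=
    (LipschitzWith.of_dist_le' (by simpa only [dist_eq_norm] using hflip)).continuous
  have hw : Tendsto (fun k => u k - γ k • gradient f (u k)) atTop (𝓝 ubar) := by
    simpa using hu.sub (hγ0.smul ((hgrad.tendsto ubar).comp hu))
  have hC : Convex ℝ (closure {x : E | g x ≠ ⊤}) := (hwc.convex_dom hgbot).closure
  obtain ⟨p, hpC, hpmin⟩ := exists_norm_eq_iInf_of_complete_convex ⟨z₀, subset_closure hz₀⟩
    isClosed_closure.isComplete hC ubar
  have hp := (norm_eq_iInf_iff_real_inner_le_zero hC hpC).1 hpmin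
  refine ⟨p, hpC, fun w hw => ?_, tendsto_of_forall_inner_le_zero hp (fun k => subset_closure ?_)
    fun a ha => ?_⟩
  · have := norm_sub_sq_add_le_of_inner_le_zero (hp w hw)
    exact (pow_le_pow_iff_left₀ (norm_nonneg _) (norm_nonneg _) two_ne_zero).1
      (by linarith [sq_nonneg ‖w - p‖])
  · have := (hy k z₀).trans_lt (EReal.add_lt_top hz₀ (EReal.coe_ne_top _))
    exact fun htop => (htop ▸ this).ne (EReal.top_add_coe _)
  · obtain ⟨z, hza, hz⟩ :=
      mem_closure_iff.1 hpC {z | ‖ubar - z‖ < a} (isOpen_lt (by fun_prop) continuous_const) ha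
    exact eventually_norm_sub_prox_lt hμ hminor hw hγpos hγ0 hy hz hza

theorem fb_map_tendsto_projection
    {E : Type*} [NormedAddCommGroup E] [InnerProductSpace ℝ E] [FiniteDimensional ℝ E]
    (f : E → ℝ) (g : E → EReal) (Lf ρ : ℝ)
    (hLf : 0 ≤ Lf) (hρ : 0 ≤ ρ)
    (hfd : Differentiable ℝ f)
    (hflip : ∀ x y : E, ‖gradient f x - gradient f y‖ ≤ Lf * ‖x - y‖)
    (hgtop : ∃ x, g x ≠ ⊤) (hgbot : ∀ x, g x ≠ ⊥)
    (hglsc : LowerSemicontinuous g)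
    (hwc : WeaklyConvexE ρ g)
    (u : ℕ → E) (ubar : E) (hu : Tendsto u atTop (nhds ubar))
    (γ : ℕ → ℝ) (hγpos : ∀ k, 0 < γ k) (hγρ : ∀ k, γ k * ρ < 1)
    (hγ0 : Tendsto γ atTop (nhds 0))
    (y : ℕ → E)
    (hy : ∀ k, ∀ z : E,
      g (y k) + ((1 / (2 * γ k) *
        ‖y k - (u k - γ k • gradient f (u k))‖ ^ 2 : ℝ) : EReal) ≤
      g z + ((1 / (2 * γ k) *
        ‖z - (u k - γ k • gradient f (u k))‖ ^ 2 : ℝ) : EReal)) :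
    ∃ p : E, p ∈ closure {x : E | g x ≠ ⊤} ∧
      (∀ w ∈ closure {x : E | g x ≠ ⊤}, ‖ubar - p‖ ≤ ‖ubar - w‖) ∧
      Tendsto y atTop (nhds p) :=
  fb_map_tendsto_projection_general f g Lf ρ hflip hgtop hgbot hglsc hwc u ubar hu γ hγpos hγ0 y hy
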